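/- In any treatment-effects model, for any proper nonempty subset V of the observable variables {Y, X_1, ..., X_ℓ, T}, the marginal information structure (Σ^V, E^V) disclosing the joint distribution of the variables in V is not maximally informative (in the robust informativeness order) for implementing any action. -/

import Mathlib

open Finset

/-- The observable variables of the treatment-effects model: the outcome `Y`
(`Sum.inr false`), the covariates `X_1, ..., X_ℓ` (`Sum.inl j`), and the treatment `T`
(`Sum.inr true`). -/
def Var (ℓ : ℕ) : Type := Sum (Fin ℓ) Bool

instance {ℓ : ℕ} : Fintype (Var ℓ) := inferInstanceAs (Fintype (Sum (Fin ℓ) Bool))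
instance {ℓ : ℕ} : DecidableEq (Var ℓ) := inferInstanceAs (DecidableEq (Sum (Fin ℓ) Bool))

/-- The domain of each observable variable. -/
def dom {ℓ : ℕ} (Yt : Type) (Xj : Fin ℓ → Type) (T : Type) : Var ℓ → Type
  | .inl j => Xj j
  | .inr false => Yt
  | .inr true => T

instance {ℓ : ℕ} {Yt : Type} {Xj : Fin ℓ → Type} {T : Type}
    [Fintype Yt] [∀ j, Fintype (Xj j)] [Fintype T] :
    ∀ v : Var ℓ, Fintype (dom Yt Xj T v)
  | .inl j => inferInstanceAs (Fintype (Xj j))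
  | .inr false => inferInstanceAs (Fintype Yt)
  | .inr true => inferInstanceAs (Fintype T)

instance {ℓ : ℕ} {Yt : Type} {Xj : Fin ℓ → Type} {T : Type}
    [DecidableEq Yt] [∀ j, DecidableEq (Xj j)] [DecidableEq T] :
    ∀ v : Var ℓ, DecidableEq (dom Yt Xj T v)
  | .inl j => inferInstanceAs (DecidableEq (Xj j))
  | .inr false => inferInstanceAs (DecidableEq Yt)
  | .inr true => inferInstanceAs (DecidableEq T)

/-- A state is an assignment of a value to each observable variable. -/
def St {ℓ : ℕ} (Yt : Type) (Xj : Fin ℓ → Type) (T : Type) : Type :=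
  ∀ v : Var ℓ, dom Yt Xj T v

instance {ℓ : ℕ} {Yt : Type} {Xj : Fin ℓ → Type} {T : Type}
    [Fintype Yt] [∀ j, Fintype (Xj j)] [Fintype T]
    [DecidableEq Yt] [∀ j, DecidableEq (Xj j)] [DecidableEq T] :
    Fintype (St Yt Xj T) := inferInstanceAs (Fintype (∀ v : Var ℓ, dom Yt Xj T v))

instance {ℓ : ℕ} {Yt : Type} {Xj : Fin ℓ → Type} {T : Type}
    [DecidableEq Yt] [∀ j, DecidableEq (Xj j)] [DecidableEq T] :
    DecidableEq (St Yt Xj T) :=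
  inferInstanceAs (DecidableEq (∀ v : Var ℓ, dom Yt Xj T v))

/-- The outcome component of a state. -/
def stY {ℓ : ℕ} {Yt : Type} {Xj : Fin ℓ → Type} {T : Type} (ω : St Yt Xj T) : Yt :=
  ω (Sum.inr false)

/-- The covariate components of a state. -/
def stX {ℓ : ℕ} {Yt : Type} {Xj : Fin ℓ → Type} {T : Type} (ω : St Yt Xj T) :
    ∀ j, Xj j := fun j => ω (Sum.inl j)

/-- The treatment component of a state. -/
def stT {ℓ : ℕ} {Yt : Type} {Xj : Fin ℓ → Type} {T : Type} (ω : St Yt Xj T) : T :=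
  ω (Sum.inr true)

/-- Inverse-propensity-weighted utility `u(a,(y,x,t)) = y·1{a=t}/P(t|x)`. -/
noncomputable def teU {ℓ : ℕ} {Yt : Type} {Xj : Fin ℓ → Type} {T : Type} [DecidableEq T]
    (yval : Yt → ℝ) (p : (∀ j, Xj j) → T → ℝ) (a : T) (ω : St Yt Xj T) : ℝ :=
  yval (stY ω) * (if a = stT ω then 1 else 0) / p (stX ω) (stT ω)

/-- Expected payoff `⟨α, ν⟩` of a mixed action `α ∈ Δ(T)` against `ν ∈ Δ(Ω)`. -/
noncomputable def tePay {ℓ : ℕ} {Yt : Type} {Xj : Fin ℓ → Type} {T : Type}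
    [Fintype Yt] [∀ j, Fintype (Xj j)] [Fintype T]
    [DecidableEq Yt] [∀ j, DecidableEq (Xj j)] [DecidableEq T]
    (yval : Yt → ℝ) (p : (∀ j, Xj j) → T → ℝ) (α : T → ℝ) (ν : St Yt Xj T → ℝ) : ℝ :=
  ∑ a, ∑ ω, α a * (teU yval p a ω * ν ω)

/-- The admissible set `P`: distributions consistent with the assignment mechanism,
`ν(t,x) = P(t|x)·ν(x)`. -/
def teP {ℓ : ℕ} {Yt : Type} {Xj : Fin ℓ → Type} {T : Type}
    [Fintype Yt] [∀ j, Fintype (Xj j)] [Fintype T]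
    [DecidableEq Yt] [∀ j, DecidableEq (Xj j)] [DecidableEq T]
    (p : (∀ j, Xj j) → T → ℝ) : Set (St Yt Xj T → ℝ) :=
  {ν ∈ stdSimplex ℝ (St Yt Xj T) |
    ∀ (t : T) (x : ∀ j, Xj j),
      (∑ ω ∈ univ.filter fun ω : St Yt Xj T => stX ω = x ∧ stT ω = t, ν ω)
        = p x t * ∑ ω ∈ univ.filter fun ω : St Yt Xj T => stX ω = x, ν ω}

/-- An experiment: each row is a probability distribution on the message set. -/
def IsStochastic {Ω S : Type*} [Fintype Ω] [Fintype S] (E : Ω → S → ℝ) : Prop :=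
  (∀ ω σ, 0 ≤ E ω σ) ∧ ∀ ω, ∑ σ, E ω σ = 1

/-- Kernel of the linear extension of an experiment. -/
def kerSet {Ω S : Type*} [Fintype Ω] [Fintype S] (E : Ω → S → ℝ) : Set (Ω → ℝ) :=
  {v | ∀ σ, ∑ ω, E ω σ * v ω = 0}

/-- The identified set `P(Σ,E) = {ν ∈ P : Eν = Eμ}`. -/
def identified {Ω S : Type*} [Fintype Ω] [Fintype S] (P : Set (Ω → ℝ)) (μ : Ω → ℝ)
    (E : Ω → S → ℝ) : Set (Ω → ℝ) :=
  {ν ∈ P | ∀ σ, ∑ ω, E ω σ * ν ω = ∑ ω, E ω σ * μ ω}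

/-- `(Σ,E)` implements the mixed action `α ∈ Δ(T)` in the treatment-effects model. -/
noncomputable def Implements {ℓ : ℕ} {Yt : Type} {Xj : Fin ℓ → Type} {T : Type}
    [Fintype Yt] [∀ j, Fintype (Xj j)] [Fintype T]
    [DecidableEq Yt] [∀ j, DecidableEq (Xj j)] [DecidableEq T]
    {S : Type*} [Fintype S]
    (yval : Yt → ℝ) (p : (∀ j, Xj j) → T → ℝ) (μ : St Yt Xj T → ℝ)
    (E : St Yt Xj T → S → ℝ) (α : T → ℝ) : Prop :=
  α ∈ stdSimplex ℝ T ∧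
    ∀ β ∈ stdSimplex ℝ T,
      sInf (tePay yval p β '' identified (teP p) μ E)
        ≤ sInf (tePay yval p α '' identified (teP p) μ E)

/-- `(Σ,E)` is a maximal element, under the robust informativeness order
`ker E' ⊆ ker E`, of the set of structures implementing `α`. -/
noncomputable def MaximalForTE {ℓ : ℕ} {Yt : Type} {Xj : Fin ℓ → Type} {T : Type}
    [Fintype Yt] [∀ j, Fintype (Xj j)] [Fintype T]
    [DecidableEq Yt] [∀ j, DecidableEq (Xj j)] [DecidableEq T]
    {S : Type*} [Fintype S]
    (yval : Yt → ℝ) (p : (∀ j, Xj j) → T → ℝ) (μ : St Yt Xj T → ℝ)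
    (E : St Yt Xj T → S → ℝ) (α : T → ℝ) : Prop :=
  IsStochastic E ∧ Implements yval p μ E α ∧
    ∀ (n : ℕ) (E' : St Yt Xj T → Fin n → ℝ), IsStochastic E' →
      Implements yval p μ E' α → kerSet E' ⊆ kerSet E → kerSet E' = kerSet E

/-- The marginal experiment `E^V` disclosing the joint distribution of the variables
in `V`: it sends each state to the point mass at its projection onto `V`. -/
def marginalExp {ℓ : ℕ} {Yt : Type} {Xj : Fin ℓ → Type} {T : Type}
    [DecidableEq Yt] [∀ j, DecidableEq (Xj j)] [DecidableEq T]
    (V : Finset (Var ℓ)) (ω : St Yt Xj T)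
    (m : ∀ v : {v // v ∈ V}, dom Yt Xj T v.1) : ℝ :=
  if (fun v : {v // v ∈ V} => ω v.1) = m then 1 else 0

section Aux16
set_option linter.unusedSectionVars false

variable {ℓ : ℕ} {Yt : Type} {Xj : Fin ℓ → Type} {T : Type}
    [Fintype Yt] [∀ j, Fintype (Xj j)] [Fintype T]
    [DecidableEq Yt] [∀ j, DecidableEq (Xj j)] [DecidableEq T]

/-- Build a state from its components. -/
def ωst (y : Yt) (x : ∀ j, Xj j) (t : T) : St Yt Xj T := fun v =>
  match v with
  | .inl j => x j
  | .inr false => y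
  | .inr true => t

lemma ωst_eta (ω : St Yt Xj T) : ωst (stY ω) (stX ω) (stT ω) = ω := by
  funext v
  match v with
  | .inl j => rfl
  | .inr false => rfl
  | .inr true => rfl

lemma stY_ωst (y : Yt) (x : ∀ j, Xj j) (t : T) : stY (ωst y x t) = y := rfl
lemma stX_ωst (y : Yt) (x : ∀ j, Xj j) (t : T) : stX (ωst y x t) = x := rfl
lemma stT_ωst (y : Yt) (x : ∀ j, Xj j) (t : T) : stT (ωst y x t) = t := rfl

lemma ωst_eq_imp {y y' : Yt} {x x' : ∀ j, Xj j} {t t' : T}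
    (h : ωst y x t = ωst y' x' t') : y = y' ∧ x = x' ∧ t = t' :=
  ⟨congrFun h (Sum.inr false), funext fun j => congrFun h (Sum.inl j),
    congrFun h (Sum.inr true)⟩

/-- Exactly one state has given components. -/
lemma sum_state_unique (y : Yt) (x : ∀ j, Xj j) (t : T) (c : St Yt Xj T → ℝ) :
    ∑ ω : St Yt Xj T, (if stY ω = y ∧ x = stX ω ∧ t = stT ω then c ω else 0)
      = c (ωst y x t) := by
  rw [Finset.sum_eq_single (ωst y x t)]
  · rw [if_pos ⟨rfl, rfl, rfl⟩]
  · intro ω _ hne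
    rw [if_neg]
    rintro ⟨h1, h2, h3⟩
    exact hne (by rw [← ωst_eta ω, h1, ← h2, ← h3])
  · intro h; exact absurd (Finset.mem_univ _) h

end Aux16
section Aux16b
set_option linter.unusedSectionVars false

variable {ℓ : ℕ} {Yt : Type} {Xj : Fin ℓ → Type} {T : Type}
    [Fintype Yt] [∀ j, Fintype (Xj j)] [Fintype T]
    [DecidableEq Yt] [∀ j, DecidableEq (Xj j)] [DecidableEq T]

lemma marg_eq_of_agree {V : Finset (Var ℓ)} {ω₁ ω₂ : St Yt Xj T}
    (h : ∀ v ∈ V, ω₁ v = ω₂ v) (m : ∀ v : {v // v ∈ V}, dom Yt Xj T v.1) :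
    marginalExp V ω₁ m = marginalExp V ω₂ m := by
  have hproj : (fun v : {v // v ∈ V} => ω₁ v.1) = (fun v : {v // v ∈ V} => ω₂ v.1) :=
    funext fun v => h v.1 v.2
  unfold marginalExp
  rw [hproj]

lemma sum_marg_row (V : Finset (Var ℓ)) (ω : St Yt Xj T) :
    ∑ m, marginalExp (Yt := Yt) (Xj := Xj) (T := T) V ω m = 1 := by
  unfold marginalExp
  rw [Finset.sum_ite_eq Finset.univ (fun v : {v // v ∈ V} => ω v.1)
    (fun _ => (1:ℝ))]
  simp

lemma ker_marg_sum_zero {V : Finset (Var ℓ)} {v : St Yt Xj T → ℝ}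
    (hv : v ∈ kerSet (marginalExp V)) : ∑ ω, v ω = 0 := by
  have h := Finset.sum_fiberwise Finset.univ
    (fun ω : St Yt Xj T => (fun vv : {vv // vv ∈ V} => ω vv.1)) v
  rw [← h]
  refine Finset.sum_eq_zero fun m _ => ?_
  have h2 := hv m
  unfold marginalExp at h2
  simp only [ite_mul, one_mul, zero_mul] at h2
  rw [Finset.sum_filter]
  exact h2

lemma pair_mem_ker {V : Finset (Var ℓ)} {ω₁ ω₂ : St Yt Xj T}
    (h : ∀ v ∈ V, ω₁ v = ω₂ v) :
    (fun ω => (if ω = ω₁ then (1:ℝ) else 0) - (if ω = ω₂ then 1 else 0))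
      ∈ kerSet (marginalExp V) := by
  intro m
  simp only [mul_sub, Finset.sum_sub_distrib, mul_ite, mul_one, mul_zero]
  rw [Finset.sum_ite_eq' Finset.univ ω₁ (fun ω => marginalExp V ω m),
    Finset.sum_ite_eq' Finset.univ ω₂ (fun ω => marginalExp V ω m)]
  simp [marg_eq_of_agree h m]

lemma dot_pair (g : St Yt Xj T → ℝ) (a b : St Yt Xj T) :
    ∑ ω, g ω * ((if ω = a then (1:ℝ) else 0) - (if ω = b then 1 else 0))
      = g a - g b := by
  simp only [mul_sub, Finset.sum_sub_distrib, mul_ite, mul_one, mul_zero]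
  rw [Finset.sum_ite_eq' Finset.univ a g, Finset.sum_ite_eq' Finset.univ b g]
  simp

/-- Normalizing constant for the auxiliary binary experiment. -/
noncomputable def cconst (f : St Yt Xj T → ℝ) : ℝ := (4 * (1 + ∑ ω, |f ω|))⁻¹

lemma cconst_pos (f : St Yt Xj T → ℝ) : 0 < cconst f := by
  have h : (0:ℝ) ≤ ∑ ω, |f ω| := Finset.sum_nonneg fun ω _ => abs_nonneg _
  have : (0:ℝ) < 4 * (1 + ∑ ω, |f ω|) := by positivity
  exact inv_pos.mpr this

lemma cconst_bound (f : St Yt Xj T → ℝ) (ω : St Yt Xj T) :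
    cconst f * |f ω| ≤ 1/4 := by
  have h0 : (0:ℝ) ≤ ∑ ω', |f ω'| := Finset.sum_nonneg fun ω' _ => abs_nonneg _
  have h1 : |f ω| ≤ 1 + ∑ ω', |f ω'| := by
    have := Finset.single_le_sum (f := fun ω' => |f ω'|)
      (fun ω' _ => abs_nonneg _) (Finset.mem_univ ω)
    linarith
  have h2 : (0:ℝ) < 4 * (1 + ∑ ω', |f ω'|) := by positivity
  have hc := cconst_pos f
  calc cconst f * |f ω| ≤ cconst f * (1 + ∑ ω', |f ω'|) :=
        mul_le_mul_of_nonneg_left h1 hc.le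
  _ = 1/4 := by
        rw [cconst, inv_mul_eq_div, div_eq_iff h2.ne']
        ring

/-- The experiment combining the marginal experiment for `V` with a binary
experiment disclosing the value of the linear functional `f`. -/
noncomputable def combE (V : Finset (Var ℓ)) (f : St Yt Xj T → ℝ) :
    St Yt Xj T → ((∀ v : {v // v ∈ V}, dom Yt Xj T v.1) ⊕ Bool) → ℝ :=
  fun ω s => Sum.elim (fun m => (1/2) * marginalExp V ω m)
    (fun b => 1/4 + (if b then cconst f else -(cconst f)) * f ω) s

lemma combE_stochastic (V : Finset (Var ℓ)) (f : St Yt Xj T → ℝ) :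
    IsStochastic (combE V f) := by
  constructor
  · rintro ω (m | b)
    · simp only [combE, Sum.elim_inl]
      unfold marginalExp
      split <;> norm_num
    · simp only [combE, Sum.elim_inr]
      have hb := cconst_bound f ω
      have habs : |(if b then cconst f else -(cconst f)) * f ω| ≤ 1/4 := by
        rw [abs_mul]
        have h' : |if b then cconst f else -(cconst f)| = cconst f := by
          cases b <;> simp [abs_of_pos (cconst_pos f)]
        rw [h']
        exact hb
      have := neg_abs_le ((if b then cconst f else -(cconst f)) * f ω)
      linarith [habs, this]
  · intro ω
    rw [Fintype.sum_sum_type]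
    simp only [combE, Sum.elim_inl, Sum.elim_inr]
    rw [← Finset.mul_sum, sum_marg_row V ω, Fintype.sum_bool]
    simp
    ring

lemma ker_combE (V : Finset (Var ℓ)) (f : St Yt Xj T → ℝ) :
    kerSet (combE V f) = kerSet (marginalExp V) ∩ {v | ∑ ω, f ω * v ω = 0} := by
  ext v
  constructor
  · intro hv
    have hK : v ∈ kerSet (marginalExp V) := by
      intro m
      have h := hv (Sum.inl m)
      simp only [combE, Sum.elim_inl, mul_assoc] at h
      rw [← Finset.mul_sum] at h
      have : (1/2 : ℝ) ≠ 0 := by norm_num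
      exact (mul_eq_zero.mp h).resolve_left this
    refine ⟨hK, ?_⟩
    have hsum : ∑ ω, v ω = 0 := ker_marg_sum_zero hK
    have h := hv (Sum.inr true)
    simp only [combE, Sum.elim_inr, if_true, add_mul, Finset.sum_add_distrib,
      mul_assoc] at h
    rw [← Finset.mul_sum, ← Finset.mul_sum, hsum, mul_zero, zero_add] at h
    have hc := (cconst_pos f).ne'
    exact (mul_eq_zero.mp h).resolve_left hc
  · rintro ⟨hK, hf⟩
    have hsum : ∑ ω, v ω = 0 := ker_marg_sum_zero hK
    rintro (m | b)
    · simp only [combE, Sum.elim_inl, mul_assoc]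
      rw [← Finset.mul_sum, hK m, mul_zero]
    · simp only [combE, Sum.elim_inr, add_mul, Finset.sum_add_distrib, mul_assoc]
      rw [← Finset.mul_sum, ← Finset.mul_sum, hsum, mul_zero, Set.mem_setOf_eq.mp hf,
        mul_zero, add_zero]

lemma kerSet_reindex {Ω S : Type*} [Fintype Ω] [Fintype S] {n : ℕ}
    (e : S ≃ Fin n) (E : Ω → S → ℝ) :
    kerSet (fun ω σ => E ω (e.symm σ)) = kerSet E := by
  ext v
  constructor
  · intro h σ
    have := h (e σ)
    simpa using this
  · intro h σ
    exact h (e.symm σ)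

lemma isStochastic_reindex {Ω S : Type*} [Fintype Ω] [Fintype S] {n : ℕ}
    (e : S ≃ Fin n) {E : Ω → S → ℝ} (hE : IsStochastic E) :
    IsStochastic (fun ω σ => E ω (e.symm σ)) := by
  refine ⟨fun ω σ => hE.1 _ _, fun ω => ?_⟩
  rw [Equiv.sum_comp e.symm (E ω)]
  exact hE.2 ω

lemma identified_eq {Ω S : Type*} [Fintype Ω] [Fintype S] (P : Set (Ω → ℝ))
    (μ : Ω → ℝ) (E : Ω → S → ℝ) :
    identified P μ E = {ν ∈ P | (fun ω => ν ω - μ ω) ∈ kerSet E} := by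
  ext ν
  simp only [identified, kerSet, Set.mem_setOf_eq, Set.mem_sep_iff]
  refine and_congr_right fun _ => forall_congr' fun σ => ?_
  rw [← sub_eq_zero]
  simp [mul_sub, Finset.sum_sub_distrib]

end Aux16b
section Aux16c
set_option linter.unusedSectionVars false

variable {ℓ : ℕ} {Yt : Type} {Xj : Fin ℓ → Type} {T : Type}
    [Fintype Yt] [∀ j, Fintype (Xj j)] [Fintype T]
    [DecidableEq Yt] [∀ j, DecidableEq (Xj j)] [DecidableEq T]

lemma teQ_sum {p : (∀ j, Xj j) → T → ℝ} (hp : ∀ x t, 0 < p x t)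
    {ν : St Yt Xj T → ℝ} (hν : ν ∈ teP p) (a : T) :
    ∑ ω, (if a = stT ω then (1:ℝ) else 0) / p (stX ω) (stT ω) * ν ω = 1 := by
  obtain ⟨⟨hν0, hν1⟩, hcons⟩ := hν
  have h1 : ∀ x : ∀ j, Xj j,
      (∑ ω ∈ Finset.univ.filter fun ω : St Yt Xj T => stX ω = x,
        (if a = stT ω then (1:ℝ) else 0) / p (stX ω) (stT ω) * ν ω)
      = (∑ ω ∈ Finset.univ.filter fun ω : St Yt Xj T => stX ω = x ∧ stT ω = a, ν ω)
          / p x a := by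
    intro x
    calc ∑ ω ∈ Finset.univ.filter fun ω : St Yt Xj T => stX ω = x,
          (if a = stT ω then (1:ℝ) else 0) / p (stX ω) (stT ω) * ν ω
        = ∑ ω ∈ Finset.univ.filter fun ω : St Yt Xj T => stX ω = x,
          (if stT ω = a then ν ω else 0) / p x a := by
          refine Finset.sum_congr rfl fun ω hω => ?_
          rcases Finset.mem_filter.mp hω with ⟨-, hx⟩
          by_cases h : stT ω = a
          · rw [if_pos h, if_pos h.symm, hx, h]
            ring
          · rw [if_neg h, if_neg fun hh => h hh.symm]
            simp
    _ = (∑ ω ∈ Finset.univ.filter fun ω : St Yt Xj T => stX ω = x,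
          if stT ω = a then ν ω else 0) / p x a := by rw [Finset.sum_div]
    _ = (∑ ω ∈ (Finset.univ.filter fun ω : St Yt Xj T => stX ω = x).filter
          fun ω => stT ω = a, ν ω) / p x a := by rw [← Finset.sum_filter]
    _ = (∑ ω ∈ Finset.univ.filter fun ω : St Yt Xj T => stX ω = x ∧ stT ω = a, ν ω)
          / p x a := by rw [Finset.filter_filter]
  calc ∑ ω, (if a = stT ω then (1:ℝ) else 0) / p (stX ω) (stT ω) * ν ω
      = ∑ x, ∑ ω ∈ Finset.univ.filter fun ω : St Yt Xj T => stX ω = x,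
          (if a = stT ω then (1:ℝ) else 0) / p (stX ω) (stT ω) * ν ω :=
        (Finset.sum_fiberwise Finset.univ stX _).symm
  _ = ∑ x, (∑ ω ∈ Finset.univ.filter fun ω : St Yt Xj T => stX ω = x ∧ stT ω = a, ν ω)
          / p x a := Finset.sum_congr rfl fun x _ => h1 x
  _ = ∑ x, ∑ ω ∈ Finset.univ.filter fun ω : St Yt Xj T => stX ω = x, ν ω := by
        refine Finset.sum_congr rfl fun x _ => ?_
        rw [hcons a x, mul_div_cancel_left₀ _ (hp x a).ne']
  _ = ∑ ω, ν ω := Finset.sum_fiberwise Finset.univ stX ν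
  _ = 1 := hν1

lemma teU_mul (yval : Yt → ℝ) (p : (∀ j, Xj j) → T → ℝ) (a : T)
    (ω : St Yt Xj T) (c : ℝ) :
    teU yval p a ω * c
      = yval (stY ω) * ((if a = stT ω then (1:ℝ) else 0) / p (stX ω) (stT ω) * c) := by
  unfold teU
  ring

lemma q_nonneg {p : (∀ j, Xj j) → T → ℝ} (hp : ∀ x t, 0 < p x t) (a : T)
    (ω : St Yt Xj T) {c : ℝ} (hc : 0 ≤ c) :
    0 ≤ (if a = stT ω then (1:ℝ) else 0) / p (stX ω) (stT ω) * c := by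
  apply mul_nonneg _ hc
  apply div_nonneg _ (hp _ _).le
  split <;> norm_num

lemma tePay_inner_ge {yval : Yt → ℝ} {p : (∀ j, Xj j) → T → ℝ} {mval : ℝ}
    (hp : ∀ x t, 0 < p x t) (hm : ∀ y, mval ≤ yval y)
    {ν : St Yt Xj T → ℝ} (hν : ν ∈ teP p) (a : T) :
    mval ≤ ∑ ω, teU yval p a ω * ν ω := by
  have hq := teQ_sum hp hν a
  have hν0 : ∀ ω, 0 ≤ ν ω := hν.1.1
  calc mval = mval * ∑ ω, (if a = stT ω then (1:ℝ) else 0) / p (stX ω) (stT ω) * ν ω := by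
        rw [hq, mul_one]
  _ = ∑ ω, mval * ((if a = stT ω then (1:ℝ) else 0) / p (stX ω) (stT ω) * ν ω) :=
        Finset.mul_sum _ _ _
  _ ≤ ∑ ω, teU yval p a ω * ν ω := by
        refine Finset.sum_le_sum fun ω _ => ?_
        rw [teU_mul]
        exact mul_le_mul_of_nonneg_right (hm _) (q_nonneg hp a ω (hν0 ω))

lemma tePay_ge {yval : Yt → ℝ} {p : (∀ j, Xj j) → T → ℝ} {mval : ℝ}
    (hp : ∀ x t, 0 < p x t) (hm : ∀ y, mval ≤ yval y)
    {β : T → ℝ} (hβ : β ∈ stdSimplex ℝ T)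
    {ν : St Yt Xj T → ℝ} (hν : ν ∈ teP p) :
    mval ≤ tePay yval p β ν := by
  obtain ⟨hβ0, hβ1⟩ := hβ
  unfold tePay
  calc mval = ∑ a, β a * mval := by rw [← Finset.sum_mul, hβ1, one_mul]
  _ ≤ ∑ a, β a * ∑ ω, teU yval p a ω * ν ω := by
        refine Finset.sum_le_sum fun a _ => ?_
        exact mul_le_mul_of_nonneg_left (tePay_inner_ge hp hm hν a) (hβ0 a)
  _ = ∑ a, ∑ ω, β a * (teU yval p a ω * ν ω) := by
        refine Finset.sum_congr rfl fun a _ => ?_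
        rw [Finset.mul_sum]

lemma tePay_eq {yval : Yt → ℝ} {p : (∀ j, Xj j) → T → ℝ} {mval : ℝ}
    (hp : ∀ x t, 0 < p x t)
    {β : T → ℝ} (hβ : β ∈ stdSimplex ℝ T)
    {ν : St Yt Xj T → ℝ} (hν : ν ∈ teP p)
    (hsupp : ∀ ω, ν ω ≠ 0 → yval (stY ω) = mval) :
    tePay yval p β ν = mval := by
  obtain ⟨hβ0, hβ1⟩ := hβ
  have hinner : ∀ a, ∑ ω, teU yval p a ω * ν ω = mval := by
    intro a
    have hq := teQ_sum hp hν a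
    calc ∑ ω, teU yval p a ω * ν ω
        = ∑ ω, mval * ((if a = stT ω then (1:ℝ) else 0) / p (stX ω) (stT ω) * ν ω) := by
          refine Finset.sum_congr rfl fun ω _ => ?_
          rw [teU_mul]
          by_cases h : ν ω = 0
          · rw [h]; ring_nf
          · rw [hsupp ω h]
    _ = mval * ∑ ω, (if a = stT ω then (1:ℝ) else 0) / p (stX ω) (stT ω) * ν ω :=
          (Finset.mul_sum _ _ _).symm
    _ = mval := by rw [hq, mul_one]
  unfold tePay
  calc ∑ a, ∑ ω, β a * (teU yval p a ω * ν ω)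
      = ∑ a, β a * ∑ ω, teU yval p a ω * ν ω := by
        refine Finset.sum_congr rfl fun a _ => (Finset.mul_sum _ _ _).symm
  _ = ∑ a, β a * mval := Finset.sum_congr rfl fun a _ => by rw [hinner a]
  _ = mval := by rw [← Finset.sum_mul, hβ1, one_mul]

/-- Key swap lemma: for any `F` factoring through `(stX, stT)`, the `F`-moment of
the modified distribution `ν*` agrees with that of `μ`. -/
lemma nustar_moment (y₀ : Yt) (F : St Yt Xj T → ℝ)
    (G : (∀ j, Xj j) → T → ℝ) (hF : ∀ ω, F ω = G (stX ω) (stT ω))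
    (μ : St Yt Xj T → ℝ) :
    ∑ ω, F ω * (if stY ω = y₀ then
        ∑ ω' ∈ Finset.univ.filter fun ω' : St Yt Xj T =>
          stX ω' = stX ω ∧ stT ω' = stT ω, μ ω' else 0)
      = ∑ ω, F ω * μ ω := by
  have step1 : ∀ ω : St Yt Xj T, F ω * (if stY ω = y₀ then
        ∑ ω' ∈ Finset.univ.filter fun ω' : St Yt Xj T =>
          stX ω' = stX ω ∧ stT ω' = stT ω, μ ω' else 0)
      = ∑ ω' : St Yt Xj T,
          if stY ω = y₀ ∧ stX ω' = stX ω ∧ stT ω' = stT ω then F ω' * μ ω' else 0 := by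
    intro ω
    by_cases h : stY ω = y₀
    · rw [if_pos h, Finset.mul_sum, Finset.sum_filter]
      refine Finset.sum_congr rfl fun ω' _ => ?_
      by_cases h2 : stX ω' = stX ω ∧ stT ω' = stT ω
      · rw [if_pos h2, if_pos ⟨h, h2⟩]
        have : F ω = F ω' := by rw [hF ω, hF ω', h2.1, h2.2]
        rw [this]
      · rw [if_neg h2, if_neg fun hh => h2 hh.2]
    · rw [if_neg h, mul_zero]
      exact (Finset.sum_eq_zero fun ω' _ => if_neg fun hh => h hh.1).symm
  calc ∑ ω, F ω * (if stY ω = y₀ then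
        ∑ ω' ∈ Finset.univ.filter fun ω' : St Yt Xj T =>
          stX ω' = stX ω ∧ stT ω' = stT ω, μ ω' else 0)
      = ∑ ω : St Yt Xj T, ∑ ω' : St Yt Xj T,
          if stY ω = y₀ ∧ stX ω' = stX ω ∧ stT ω' = stT ω then F ω' * μ ω' else 0 :=
        Finset.sum_congr rfl fun ω _ => step1 ω
  _ = ∑ ω' : St Yt Xj T, ∑ ω : St Yt Xj T,
          if stY ω = y₀ ∧ stX ω' = stX ω ∧ stT ω' = stT ω then F ω' * μ ω' else 0 :=
        Finset.sum_comm
  _ = ∑ ω' : St Yt Xj T, F ω' * μ ω' := by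
        refine Finset.sum_congr rfl fun ω' _ => ?_
        exact sum_state_unique y₀ (stX ω') (stT ω') (fun _ => F ω' * μ ω')

end Aux16c
section Aux16d
set_option linter.unusedSectionVars false

variable {ℓ : ℕ} {Yt : Type} {Xj : Fin ℓ → Type} {T : Type}
    [Fintype Yt] [∀ j, Fintype (Xj j)] [Fintype T]
    [DecidableEq Yt] [∀ j, DecidableEq (Xj j)] [DecidableEq T]

lemma filter_sum_eq (P : St Yt Xj T → Prop) [DecidablePred P] (g : St Yt Xj T → ℝ) :
    ∑ ω ∈ Finset.univ.filter P, g ω = ∑ ω, (if P ω then (1:ℝ) else 0) * g ω := by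
  rw [Finset.sum_filter]
  exact Finset.sum_congr rfl fun ω _ => by split <;> simp

lemma nustar_teP {p : (∀ j, Xj j) → T → ℝ} {μ : St Yt Xj T → ℝ}
    (hμ : μ ∈ teP p) (y₀ : Yt) :
    (fun ω : St Yt Xj T => if stY ω = y₀ then
      ∑ ω' ∈ Finset.univ.filter fun ω' : St Yt Xj T =>
        stX ω' = stX ω ∧ stT ω' = stT ω, μ ω' else 0) ∈ teP p := by
  obtain ⟨⟨hμ0, hμ1⟩, hcons⟩ := hμ
  have hmom : ∀ (F : St Yt Xj T → ℝ) (G : (∀ j, Xj j) → T → ℝ),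
      (∀ ω, F ω = G (stX ω) (stT ω)) →
      (∑ ω, F ω * (if stY ω = y₀ then
        ∑ ω' ∈ Finset.univ.filter fun ω' : St Yt Xj T =>
          stX ω' = stX ω ∧ stT ω' = stT ω, μ ω' else 0)) = ∑ ω, F ω * μ ω :=
    fun F G hF => nustar_moment y₀ F G hF μ
  refine ⟨⟨?_, ?_⟩, ?_⟩
  · intro ω
    dsimp only
    split
    · exact Finset.sum_nonneg fun ω' _ => hμ0 ω'
    · exact le_refl 0
  · have h := hmom (fun _ => 1) (fun _ _ => 1) (fun _ => rfl)
    simp only [one_mul] at h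
    rw [h]
    exact hμ1
  · intro t x
    have h1 := hmom (fun ω => if stX ω = x ∧ stT ω = t then (1:ℝ) else 0)
      (fun x' t' => if x' = x ∧ t' = t then (1:ℝ) else 0) (fun ω => rfl)
    have h2 := hmom (fun ω => if stX ω = x then (1:ℝ) else 0)
      (fun x' _ => if x' = x then (1:ℝ) else 0) (fun ω => rfl)
    rw [filter_sum_eq, filter_sum_eq, h1, h2, ← filter_sum_eq, ← filter_sum_eq]
    exact hcons t x

lemma nustar_ker [Nonempty Yt] {V : Finset (Var ℓ)}
    (hYV : (Sum.inr false : Var ℓ) ∉ V) (μ : St Yt Xj T → ℝ) (y₀ : Yt) :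
    (fun ω => (if stY ω = y₀ then
      ∑ ω' ∈ Finset.univ.filter fun ω' : St Yt Xj T =>
        stX ω' = stX ω ∧ stT ω' = stT ω, μ ω' else 0) - μ ω)
      ∈ kerSet (marginalExp V) := by
  intro m
  have hfac : ∀ ω : St Yt Xj T, marginalExp V ω m
      = marginalExp V (ωst (Classical.arbitrary Yt) (stX ω) (stT ω)) m := by
    intro ω
    apply marg_eq_of_agree
    intro v hv
    rcases v with j | b
    · rfl
    · cases b
      · exact absurd hv hYV
      · rfl
  have hmom := nustar_moment y₀ (fun ω => marginalExp V ω m)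
    (fun x t => marginalExp V (ωst (Classical.arbitrary Yt) x t) m) hfac μ
  simp only [mul_sub, Finset.sum_sub_distrib]
  rw [hmom]
  exact sub_self _

end Aux16d

set_option linter.unusedSectionVars false
set_option maxHeartbeats 1000000

/-- in any treatment-effects model, the marginal information structure
associated with a proper nonempty subset `V` of the observable variables is not
maximally informative for implementing any action. -/
theorem stmt16 {ℓ : ℕ} {Yt : Type} {Xj : Fin ℓ → Type} {T : Type}
    [Fintype Yt] [∀ j, Fintype (Xj j)] [Fintype T]
    [DecidableEq Yt] [∀ j, DecidableEq (Xj j)] [DecidableEq T]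
    [Nonempty Yt] [∀ j, Nonempty (Xj j)] [Nonempty T]
    (hℓ : 1 ≤ ℓ) (hT : 2 ≤ Fintype.card T) (hY : 2 ≤ Fintype.card Yt)
    (hX : ∀ j, 2 ≤ Fintype.card (Xj j))
    (yval : Yt → ℝ) (p : (∀ j, Xj j) → T → ℝ)
    (hp : ∀ x t, 0 < p x t ∧ p x t < 1) (hp1 : ∀ x, ∑ t, p x t = 1)
    (j₀ : Fin ℓ)
    (hirrcov : ∀ x x' : ∀ j, Xj j, (∀ j, j ≠ j₀ → x j = x' j) → ∀ t, p x t = p x' t)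
    (μ : St Yt Xj T → ℝ) (hμ : μ ∈ teP p)
    (V : Finset (Var ℓ)) (hVne : V.Nonempty) (hVproper : V ≠ Finset.univ) :
    ∀ α ∈ stdSimplex ℝ T, ¬ MaximalForTE yval p μ (marginalExp V) α := by
  intro α hα
  rintro ⟨hstoch, himpl, hmax⟩
  have hp' : ∀ x t, 0 < p x t := fun x t => (hp x t).1
  have hex : ∃ v₀ : Var ℓ, v₀ ∉ V := by
    by_contra h
    push_neg at h
    exact hVproper (Finset.eq_univ_iff_forall.mpr h)
  obtain ⟨v₀, hv₀⟩ := hex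
  by_cases hYV : (Sum.inr false : Var ℓ) ∈ V
  · -- Case B : the outcome Y is observed, so some covariate or the treatment is not.
    -- The identified set is unchanged by additionally disclosing the (determined)
    -- assignment-mechanism functional f.
    set x₀ : ∀ j, Xj j := Classical.arbitrary _ with hx₀def
    set t₀ : T := Classical.arbitrary _ with ht₀def
    set y' : Yt := Classical.arbitrary _ with hy'def
    set f : St Yt Xj T → ℝ := fun ω =>
      (if stX ω = x₀ ∧ stT ω = t₀ then 1 else 0)
        - p x₀ t₀ * (if stX ω = x₀ then 1 else 0) with hfdef
    have hfP : ∀ ν ∈ teP p, ∑ ω, f ω * ν ω = 0 := by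
      intro ν hν
      have : ∑ ω, f ω * ν ω
          = (∑ ω, (if stX ω = x₀ ∧ stT ω = t₀ then (1:ℝ) else 0) * ν ω)
            - p x₀ t₀ * ∑ ω, (if stX ω = x₀ then (1:ℝ) else 0) * ν ω := by
        simp only [hfdef, sub_mul, Finset.sum_sub_distrib, mul_assoc, Finset.mul_sum]
      rw [this, ← filter_sum_eq, ← filter_sum_eq, hν.2 t₀ x₀, sub_self]
    -- the combined experiment
    set n : ℕ := Fintype.card ((∀ v : {v // v ∈ V}, dom Yt Xj T v.1) ⊕ Bool) with hndef
    set e := Fintype.equivFin ((∀ v : {v // v ∈ V}, dom Yt Xj T v.1) ⊕ Bool) with hedef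
    set E' : St Yt Xj T → Fin n → ℝ := fun ω σ => combE V f ω (e.symm σ) with hE'def
    have hker' : kerSet E' = kerSet (marginalExp V) ∩ {v | ∑ ω, f ω * v ω = 0} := by
      rw [hE'def, kerSet_reindex e (combE V f), ker_combE]
    have hstoch' : IsStochastic E' := isStochastic_reindex e (combE_stochastic V f)
    have hsub : kerSet E' ⊆ kerSet (marginalExp V) := by
      rw [hker']
      exact Set.inter_subset_left
    have hident : identified (teP p) μ E' = identified (teP p) μ (marginalExp V) := by
      rw [identified_eq, identified_eq]
      ext ν
      constructor
      · rintro ⟨h1, h2⟩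
        rw [hker'] at h2
        exact ⟨h1, h2.1⟩
      · rintro ⟨h1, h2⟩
        refine ⟨h1, ?_⟩
        rw [hker']
        refine ⟨h2, ?_⟩
        show ∑ ω, f ω * (ν ω - μ ω) = 0
        have hsplit : ∑ ω, f ω * (ν ω - μ ω)
            = ∑ ω, f ω * ν ω - ∑ ω, f ω * μ ω := by
          simp [mul_sub, Finset.sum_sub_distrib]
        rw [hsplit, hfP ν h1, hfP μ hμ, sub_zero]
    have himpl' : Implements yval p μ E' α := by
      refine ⟨himpl.1, fun β hβ => ?_⟩
      rw [hident]
      exact himpl.2 β hβ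
    have hkereq := hmax n E' hstoch' himpl' hsub
    -- now exhibit a direction in ker E^V not killed by f
    -- build the two states differing only at the unobserved coordinate v₀
    have main : ∃ ω₁ ω₂ : St Yt Xj T, (∀ v ∈ V, ω₁ v = ω₂ v) ∧ f ω₁ - f ω₂ ≠ 0 := by
      rcases v₀ with j' | b
      · -- a covariate X_{j'} is unobserved
        obtain ⟨x'', hx''⟩ := Fintype.exists_ne_of_one_lt_card
          (lt_of_lt_of_le one_lt_two (hX j')) (x₀ j')
        refine ⟨ωst y' x₀ t₀, ωst y' (Function.update x₀ j' x'') t₀, ?_, ?_⟩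
        · intro v hv
          rcases v with j | b
          · have hj : j ≠ j' := fun h => hv₀ (h ▸ hv)
            show x₀ j = Function.update x₀ j' x'' j
            rw [Function.update_of_ne hj]
          · cases b <;> rfl
        · have hxne : Function.update x₀ j' x'' ≠ x₀ := by
            intro h
            exact hx'' (by rw [← congrFun h j', Function.update_self])
          have h1 : f (ωst y' x₀ t₀) = 1 - p x₀ t₀ := by
            simp [hfdef, stX_ωst, stT_ωst]
          have h2 : f (ωst y' (Function.update x₀ j' x'') t₀) = 0 := by
            simp [hfdef, stX_ωst, stT_ωst, hxne]
          rw [h1, h2, sub_zero]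
          exact sub_ne_zero_of_ne (ne_of_lt (hp x₀ t₀).2).symm
      · cases b
        · exact absurd hYV hv₀
        · -- the treatment T is unobserved
          obtain ⟨t', ht'⟩ := Fintype.exists_ne_of_one_lt_card
            (lt_of_lt_of_le one_lt_two hT) t₀
          refine ⟨ωst y' x₀ t₀, ωst y' x₀ t', ?_, ?_⟩
          · intro v hv
            rcases v with j | b
            · rfl
            · cases b
              · rfl
              · exact absurd hv hv₀
          · have h1 : f (ωst y' x₀ t₀) = 1 - p x₀ t₀ := by
              simp [hfdef, stX_ωst, stT_ωst]
            have h2 : f (ωst y' x₀ t') = - p x₀ t₀ := by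
              simp [hfdef, stX_ωst, stT_ωst, ht']
            rw [h1, h2]
            norm_num
    obtain ⟨ω₁, ω₂, hagree, hfne⟩ := main
    have hvK := pair_mem_ker hagree
    rw [← hkereq, hker'] at hvK
    have := hvK.2
    rw [Set.mem_setOf_eq, dot_pair f ω₁ ω₂] at this
    exact hfne this
  · -- Case A : the outcome Y is unobserved.  Every action is worst-case optimal,
    -- both under E^V and after disclosing any extra functional that leaves the
    -- minimizing distribution ν* in the identified set.
    obtain ⟨y₀, -, hy₀min⟩ := Finset.exists_min_image Finset.univ yval
      ⟨Classical.arbitrary Yt, Finset.mem_univ _⟩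
    set mval : ℝ := yval y₀ with hmdef
    set νs : St Yt Xj T → ℝ := fun ω => if stY ω = y₀ then
      ∑ ω' ∈ Finset.univ.filter fun ω' : St Yt Xj T =>
        stX ω' = stX ω ∧ stT ω' = stT ω, μ ω' else 0 with hνsdef
    set d : St Yt Xj T → ℝ := fun ω => νs ω - μ ω with hddef
    have hνsteP : νs ∈ teP p := nustar_teP hμ y₀
    have hdK : d ∈ kerSet (marginalExp V) := nustar_ker hYV μ y₀
    have hsupp : ∀ ω, νs ω ≠ 0 → yval (stY ω) = mval := by
      intro ω h
      by_cases hst : stY ω = y₀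
      · rw [hst]
      · exact absurd (by simp [hνsdef, hst]) h
    -- pick the two test directions
    obtain ⟨y₁, y₂, hy12⟩ := Fintype.exists_pair_of_one_lt_card
      (lt_of_lt_of_le one_lt_two hY)
    obtain ⟨t₁, t₂, ht12⟩ := Fintype.exists_pair_of_one_lt_card
      (lt_of_lt_of_le one_lt_two hT)
    set x₀ : ∀ j, Xj j := Classical.arbitrary _ with hx₀def
    set a₁ := ωst y₁ x₀ t₁ with ha₁
    set b₁ := ωst y₂ x₀ t₁ with hb₁
    set a₂ := ωst y₁ x₀ t₂ with ha₂
    set b₂ := ωst y₂ x₀ t₂ with hb₂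
    set φ₁ : St Yt Xj T → ℝ := fun ω =>
      (if ω = a₁ then 1 else 0) - (if ω = b₁ then 1 else 0) with hφ₁def
    set φ₂ : St Yt Xj T → ℝ := fun ω =>
      (if ω = a₂ then 1 else 0) - (if ω = b₂ then 1 else 0) with hφ₂def
    have hab₁ : a₁ ≠ b₁ := fun h => hy12 (ωst_eq_imp h).1
    have hab₂ : a₂ ≠ b₂ := fun h => hy12 (ωst_eq_imp h).1
    have ha₂a₁ : a₂ ≠ a₁ := fun h => ht12 (ωst_eq_imp h).2.2.symm
    have ha₂b₁ : a₂ ≠ b₁ := fun h => ht12 (ωst_eq_imp h).2.2.symm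
    have hb₂a₁ : b₂ ≠ a₁ := fun h => ht12 (ωst_eq_imp h).2.2.symm
    have hb₂b₁ : b₂ ≠ b₁ := fun h => ht12 (ωst_eq_imp h).2.2.symm
    have hφ₁K : φ₁ ∈ kerSet (marginalExp V) := by
      apply pair_mem_ker
      intro v hv
      rcases v with j | b
      · rfl
      · cases b
        · exact absurd hv hYV
        · rfl
    have hφ₂K : φ₂ ∈ kerSet (marginalExp V) := by
      apply pair_mem_ker
      intro v hv
      rcases v with j | b
      · rfl
      · cases b
        · exact absurd hv hYV
        · rfl
    set r₁ : ℝ := ∑ ω, φ₁ ω * d ω with hr₁def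
    set r₂ : ℝ := ∑ ω, φ₂ ω * d ω with hr₂def
    -- choose the functional f and the witness direction vv
    have main : ∃ (f vv : St Yt Xj T → ℝ),
        (∑ ω, f ω * d ω = 0) ∧ vv ∈ kerSet (marginalExp V) ∧ (∑ ω, f ω * vv ω ≠ 0) := by
      have hdot₁ : ∀ g : St Yt Xj T → ℝ, ∑ ω, g ω * φ₁ ω = g a₁ - g b₁ :=
        fun g => dot_pair g a₁ b₁
      have hdot₂ : ∀ g : St Yt Xj T → ℝ, ∑ ω, g ω * φ₂ ω = g a₂ - g b₂ :=
        fun g => dot_pair g a₂ b₂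
      have e1 : φ₁ a₁ = 1 := by simp [hφ₁def, hab₁]
      have e2 : φ₁ b₁ = -1 := by simp [hφ₁def, hab₁, Ne.symm hab₁]
      have e3 : φ₁ a₂ = 0 := by simp [hφ₁def, ha₂a₁, ha₂b₁]
      have e4 : φ₂ a₂ = 1 := by simp [hφ₂def, hab₂]
      have e5 : φ₁ b₂ = 0 := by simp [hφ₁def, hb₂a₁, hb₂b₁]
      have e6 : φ₂ b₂ = -1 := by simp [hφ₂def, hab₂, Ne.symm hab₂]
      by_cases hr₁0 : r₁ = 0
      · refine ⟨φ₁, φ₁, hr₁0, hφ₁K, ?_⟩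
        rw [hdot₁ φ₁, e1, e2]
        norm_num
      · refine ⟨fun ω => r₂ * φ₁ ω - r₁ * φ₂ ω, φ₂, ?_, hφ₂K, ?_⟩
        · show ∑ ω, (r₂ * φ₁ ω - r₁ * φ₂ ω) * d ω = 0
          have hsplit : ∑ ω, (r₂ * φ₁ ω - r₁ * φ₂ ω) * d ω
              = r₂ * ∑ ω, φ₁ ω * d ω - r₁ * ∑ ω, φ₂ ω * d ω := by
            simp [sub_mul, Finset.sum_sub_distrib, mul_assoc, Finset.mul_sum]
          rw [hsplit, ← hr₁def, ← hr₂def]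
          ring
        · show ∑ ω, (r₂ * φ₁ ω - r₁ * φ₂ ω) * φ₂ ω ≠ 0
          rw [hdot₂ (fun ω => r₂ * φ₁ ω - r₁ * φ₂ ω)]
          simp only [e3, e4, e5, e6]
          intro hcon
          apply hr₁0
          nlinarith [hcon]
    obtain ⟨f, vv, hfd, hvvK, hfvv⟩ := main
    -- the refined experiment
    set n : ℕ := Fintype.card ((∀ v : {v // v ∈ V}, dom Yt Xj T v.1) ⊕ Bool) with hndef
    set e := Fintype.equivFin ((∀ v : {v // v ∈ V}, dom Yt Xj T v.1) ⊕ Bool) with hedef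
    set E' : St Yt Xj T → Fin n → ℝ := fun ω σ => combE V f ω (e.symm σ) with hE'def
    have hker' : kerSet E' = kerSet (marginalExp V) ∩ {v | ∑ ω, f ω * v ω = 0} := by
      rw [hE'def, kerSet_reindex e (combE V f), ker_combE]
    have hstoch' : IsStochastic E' := isStochastic_reindex e (combE_stochastic V f)
    have hsub : kerSet E' ⊆ kerSet (marginalExp V) := by
      rw [hker']
      exact Set.inter_subset_left
    have hνsmem : νs ∈ identified (teP p) μ E' := by
      rw [identified_eq]
      refine ⟨hνsteP, ?_⟩
      rw [hker']
      exact ⟨hdK, hfd⟩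
    have hsinf : ∀ γ ∈ stdSimplex ℝ T,
        sInf (tePay yval p γ '' identified (teP p) μ E') = mval := by
      intro γ hγ
      apply IsLeast.csInf_eq
      constructor
      · exact ⟨νs, hνsmem, tePay_eq hp' hγ hνsteP hsupp⟩
      · rintro z ⟨ν, hνmem, rfl⟩
        exact tePay_ge hp' (fun y => hy₀min y (Finset.mem_univ y)) hγ hνmem.1
    have himpl' : Implements yval p μ E' α := by
      refine ⟨hα, fun β hβ => ?_⟩
      rw [hsinf β hβ, hsinf α hα]
    have hkereq := hmax n E' hstoch' himpl' hsub
    rw [← hkereq, hker'] at hvvK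
    exact hfvv hvvK.2
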